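/- arXiv:1003.3336 — 3 statements merged into one kernel-verified Lean document; each statement's English description precedes it below -/
import Mathlib

section
/- For every n ≥ r+2 and every real polynomial p with deg p ≤ n-(r+1)-1, one has ∫_0^∞ p(x) Q_{n,r}(x) x^{α+r+1} e^{-x} dx = 0; that is, the sequence {Q_{n,r}} is quasi-orthogonal of order r+1 with respect to the Laguerre weight x^{α+r+1} e^{-x} on (0,∞). -/
open Polynomial Filter Finset MeasureTheory

/-- Quasi-orthogonality of order `r+1` of the Laguerre–Sobolev polynomials `Q_{n,r}`
with respect to the Laguerre weight `x^(α+r+1) e^{-x}` on `(0,∞)`. -/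
theorem laguerre_sobolev_quasi_orthogonal
    (α : ℝ) (hα : -1 < α)
    (r : ℕ) (M : ℕ → ℝ) (hM : ∀ i, i ≤ r → 0 < M i)
    (Q : ℕ → Polynomial ℝ)
    (hQmonic : ∀ n : ℕ, (Q n).Monic ∧ (Q n).natDegree = n)
    (hQorth : ∀ n : ℕ, ∀ p : Polynomial ℝ, p.degree < (n : WithBot ℕ) →
      (1 / Real.Gamma (α + 1)) *
          ∫ x in Set.Ioi (0:ℝ), (Q n).eval x * p.eval x * x ^ α * Real.exp (-x)
        + ∑ i ∈ Finset.range (r + 1),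
            M i * (Polynomial.derivative^[i] (Q n)).eval 0 *
              (Polynomial.derivative^[i] p).eval 0 = 0) :
    ∀ n : ℕ, r + 2 ≤ n → ∀ p : Polynomial ℝ,
      p.degree < ((n - (r + 1) : ℕ) : WithBot ℕ) →
      ∫ x in Set.Ioi (0:ℝ),
        p.eval x * (Q n).eval x * x ^ (α + r + 1) * Real.exp (-x) = 0 := by
  intro n hn p hpdeg
  by_cases hp0 : p = 0
  · simp [hp0]
  set q : Polynomial ℝ := X ^ (r + 1) * p with hq
  have hXpow : (X ^ (r + 1) : Polynomial ℝ) ≠ 0 := pow_ne_zero _ X_ne_zero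
  have hq0 : q ≠ 0 := mul_ne_zero hXpow hp0
  have hpd : p.natDegree < n - (r + 1) := by
    rw [Polynomial.natDegree_lt_iff_degree_lt hp0]; exact hpdeg
  have hqdeg : q.degree < (n : WithBot ℕ) := by
    rw [← Polynomial.natDegree_lt_iff_degree_lt hq0]
    have hqn : q.natDegree = (r + 1) + p.natDegree := by
      rw [hq, natDegree_mul hXpow hp0, natDegree_X_pow]
    omega
  -- all derivatives of q up to order r vanish at 0
  have hder : ∀ i, i ≤ r → (Polynomial.derivative^[i] q).eval 0 = 0 := by
    intro i hi
    rw [hq, Polynomial.iterate_derivative_mul, Polynomial.eval_finset_sum]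
    refine Finset.sum_eq_zero fun k hk => ?_
    have hXd : (Polynomial.derivative^[i - k] (X ^ (r + 1) : Polynomial ℝ)).eval 0 = 0 := by
      rw [Polynomial.iterate_derivative_X_pow_eq_smul]
      have hpos : r + 1 - (i - k) ≠ 0 := by omega
      simp [zero_pow hpos]
    simp [hXd]
  have h := hQorth n q hqdeg
  have hsum : ∑ i ∈ Finset.range (r + 1),
      M i * (Polynomial.derivative^[i] (Q n)).eval 0 *
        (Polynomial.derivative^[i] q).eval 0 = 0 := by
    refine Finset.sum_eq_zero fun i hi => ?_
    rw [hder i (Nat.lt_succ_iff.mp (Finset.mem_range.mp hi))]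
    ring
  rw [hsum] at h
  simp only [add_zero] at h
  have hΓ : (1 / Real.Gamma (α + 1)) ≠ 0 :=
    one_div_ne_zero (Real.Gamma_pos_of_pos (by linarith)).ne'
  have hI : ∫ x in Set.Ioi (0:ℝ), (Q n).eval x * q.eval x * x ^ α * Real.exp (-x) = 0 :=
    (mul_eq_zero.mp h).resolve_left hΓ
  have heq : Set.EqOn
      (fun x : ℝ => p.eval x * (Q n).eval x * x ^ (α + r + 1) * Real.exp (-x))
      (fun x : ℝ => (Q n).eval x * q.eval x * x ^ α * Real.exp (-x)) (Set.Ioi 0) := by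
    intro x hx
    have hx0 : (0:ℝ) < x := hx
    have hrp : x ^ (α + r + 1) = x ^ α * x ^ (r + 1 : ℕ) := by
      rw [← Real.rpow_natCast x (r + 1), ← Real.rpow_add hx0]
      push_cast
      ring_nf
    simp only [hq, eval_mul, eval_pow, eval_X, hrp]
    ring
  rw [setIntegral_congr_fun measurableSet_Ioi heq, hI]
end

section
/- For every n ≥ r+1 there exist unique real numbers a_{n,r}^0, a_{n,r}^1, …, a_{n,r}^{r+1} with a_{n,r}^0 = 1 such that Q_{n,r}(x) = Σ_{j=0}^{r+1} a_{n,r}^j L_{n-j}^{α+r+1}(x), where L_m^{α+r+1} is the m-th monic Laguerre polynomial with parameter α+r+1. -/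
/-!
Put `β = α + r + 1`. For `q = X ^ (r + 1) * p` all Sobolev terms `q^{(i)}(0)`, `i ≤ r`, vanish
and `x ^ α * x ^ (r + 1) = x ^ β`, so `Q_{n,r}` is orthogonal, for the Laguerre weight
`x ^ β * exp (-x)`, to every polynomial of degree `< n - r - 1`. In the orthogonal basis
`(L_m^β)_m` the coefficient of `L_m^β` in `Q_{n,r}` is `⟨Q_{n,r}, L_m^β⟩ / ⟨L_m^β, L_m^β⟩`; it
therefore vanishes unless `n - r - 1 ≤ m ≤ n`, and equals `1` for `m = n` because both
polynomials are monic. Uniqueness is the linear independence of polynomials of distinct degrees.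
-/

open Polynomial Filter Finset MeasureTheory

theorem LinearMap.IsOrthoᵢ.apply_basis_eq_repr_mul {ι R M : Type*} [CommSemiring R]
    [AddCommMonoid M] [Module R M] {B : LinearMap.BilinForm R M} {b : Module.Basis ι R M}
    (hb : B.IsOrthoᵢ b) (x : M) (i : ι) : B x (b i) = b.repr x i * B (b i) (b i) := by
  conv_lhs => rw [← b.linearCombination_repr x]
  rw [Finsupp.linearCombination_apply, Finsupp.sum, map_sum, LinearMap.sum_apply,
    Finset.sum_eq_single i]
  · simp
  · intro j _ hji
    simp [hb hji]
  · intro hi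
    simp [Finsupp.notMem_support_iff.mp hi]

theorem Module.Basis.eq_sum_smul_comp_iff {ι κ R M : Type*} [Fintype κ] [Semiring R]
    [AddCommMonoid M] [Module R M] (b : Module.Basis ι R M) {σ : κ → ι}
    (hσ : Function.Injective σ) (x : M) (a : κ → R) :
    x = ∑ j, a j • b (σ j) ↔ (∀ j, b.repr x (σ j) = a j) ∧ ∀ i ∉ Set.range σ, b.repr x i = 0 := by
  classical
  set y := ∑ j, a j • b (σ j)
  have hy (i : ι) : b.repr y i = ∑ j, if σ j = i then a j else 0 := by
    simp [y, Finsupp.single_apply]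
  have hy_range : ∀ j, b.repr y (σ j) = a j := fun j => by simp [hy, hσ.eq_iff]
  have hy_compl : ∀ i ∉ Set.range σ, b.repr y i = 0 := fun i hi => by
    simp only [hy]
    exact Finset.sum_eq_zero fun j _ => if_neg fun h => hi ⟨j, h⟩
  constructor
  · rintro rfl
    exact ⟨hy_range, hy_compl⟩
  · rintro ⟨hx_range, hx_compl⟩
    refine b.repr.injective (Finsupp.ext fun i => ?_)
    by_cases hi : i ∈ Set.range σ
    · obtain ⟨j, rfl⟩ := hi
      rw [hx_range, hy_range]
    · rw [hx_compl i hi, hy_compl i hi]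

namespace Polynomial.Sequence

variable {K : Type*} [Field K] (S : Sequence K)

theorem isUnit_leadingCoeff (i : ℕ) : IsUnit (S i).leadingCoeff :=
  (leadingCoeff_ne_zero.mpr (S.ne_zero i)).isUnit

variable {S} {B : LinearMap.BilinForm K K[X]}

theorem isOrthoᵢ_of_forall_degree_lt (hB : B.IsSymm)
    (hS : ∀ (m : ℕ) (p : K[X]), p.degree < m → B (S m) p = 0) : B.IsOrthoᵢ S := by
  refine LinearMap.isOrthoᵢ_def.mpr fun i j hij => ?_
  rcases hij.lt_or_gt with h | h
  · rw [hB.eq]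
    exact hS j (S i) (by simpa using h)
  · exact hS i (S j) (by simpa using h)

theorem basis_repr_eq_div (hB : B.IsSymm)
    (hS : ∀ (m : ℕ) (p : K[X]), p.degree < m → B (S m) p = 0)
    (hnorm : ∀ m, B (S m) (S m) ≠ 0) (p : K[X]) (m : ℕ) :
    (S.basis S.isUnit_leadingCoeff).repr p m = B p (S m) / B (S m) (S m) := by
  have hcoe : ⇑(S.basis S.isUnit_leadingCoeff) = S := _root_.funext (S.basis_eq_self _)
  have hortho : B.IsOrthoᵢ (S.basis S.isUnit_leadingCoeff) :=
    hcoe ▸ isOrthoᵢ_of_forall_degree_lt hB hS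
  rw [eq_div_iff (hnorm m)]
  simpa [hcoe] using (hortho.apply_basis_eq_repr_mul p m).symm

theorem existsUnique_sum_eq_of_quasiOrthogonal (hB : B.IsSymm)
    (hS : ∀ (m : ℕ) (p : K[X]), p.degree < m → B (S m) p = 0) (hnorm : ∀ m, B (S m) (S m) ≠ 0)
    {P : K[X]} {n k : ℕ} (hP : P.Monic) (hPn : P.natDegree = n) (hSn : (S n).Monic)
    (hkn : k ≤ n) (hPS : ∀ p : K[X], p.degree < ↑(n - k) → B P p = 0) :
    ∃! a : Fin (k + 1) → K, a 0 = 1 ∧ P = ∑ j, C (a j) * S (n - j) := by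
  set b := S.basis S.isUnit_leadingCoeff
  have hσ : Function.Injective fun j : Fin (k + 1) => n - j := fun i j h => by
    simp only at h
    omega
  have hsum : ∀ a : Fin (k + 1) → K,
      P = ∑ j, C (a j) * S (n - j) ↔ P = ∑ j, a j • b (n - j) := fun a => by
    simp only [b, basis_eq_self, C_mul']
  have hcoord : ∀ m, b.repr P m = B P (S m) / B (S m) (S m) := basis_repr_eq_div hB hS hnorm P
  have hPdeg : P.degree = n := by rw [degree_eq_natDegree hP.ne_zero, hPn]
  have hlead : b.repr P n = 1 := by
    have hlow : (P - S n).degree < n := hPdeg ▸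
      degree_sub_lt_left (by rw [hPdeg, S.degree_eq]) hP.ne_zero (by rw [hP, hSn])
    rw [hcoord, div_eq_one_iff_eq (hnorm n), ← hB.eq, ← sub_eq_zero, ← map_sub]
    exact hS n _ hlow
  have hcompl : ∀ m ∉ Set.range fun j : Fin (k + 1) => n - j, b.repr P m = 0 := by
    intro m hm
    rw [hcoord, div_eq_zero_iff]
    left
    rcases lt_or_ge m (n - k) with h | h
    · exact hPS _ (by simpa using h)
    · have hnm : n < m := by
        by_contra! hmn
        exact hm ⟨⟨n - m, by omega⟩, by simp only; omega⟩
      rw [← hB.eq]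
      exact hS m P (by simpa [hPdeg] using hnm)
  refine ⟨fun j => b.repr P (n - j), ⟨hlead, (hsum _).mpr ?_⟩, fun a ha => ?_⟩
  · exact (b.eq_sum_smul_comp_iff hσ P _).mpr ⟨fun j => rfl, hcompl⟩
  · funext j
    exact (((b.eq_sum_smul_comp_iff hσ P a).mp ((hsum a).mp ha.2)).1 j).symm

end Polynomial.Sequence

open Real

section LaguerreWeight

variable {β : ℝ}

theorem integrableOn_eval_mul_rpow_mul_exp (hβ : -1 < β) (p : ℝ[X]) :
    IntegrableOn (fun x => p.eval x * x ^ β * exp (-x)) (Set.Ioi 0) := by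
  have hmonomial (i : ℕ) : IntegrableOn (fun x : ℝ => x ^ i * x ^ β * exp (-x)) (Set.Ioi 0) := by
    have hs : 0 < β + i + 1 := by linarith [(i.cast_nonneg : (0 : ℝ) ≤ i)]
    refine (GammaIntegral_convergent hs).congr_fun (fun x hx => ?_) measurableSet_Ioi
    dsimp only
    rw [add_sub_cancel_right, rpow_add hx, rpow_natCast]
    ring
  have hexpand (x : ℝ) : ∑ i ∈ range (p.natDegree + 1), p.coeff i * (x ^ i * x ^ β * exp (-x)) =
      p.eval x * x ^ β * exp (-x) := by
    rw [eval_eq_sum_range, Finset.sum_mul, Finset.sum_mul]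
    exact Finset.sum_congr rfl fun i _ => by ring
  exact (integrable_finsetSum _ fun i _ => (hmonomial i).const_mul (p.coeff i)).congr
    (Eventually.of_forall hexpand)

variable (β) in
noncomputable def laguerreFunctional (hβ : -1 < β) : ℝ[X] →ₗ[ℝ] ℝ where
  toFun p := ∫ x in Set.Ioi 0, p.eval x * x ^ β * exp (-x)
  map_add' p q := by
    rw [← integral_add (integrableOn_eval_mul_rpow_mul_exp hβ p)
      (integrableOn_eval_mul_rpow_mul_exp hβ q)]
    simp only [eval_add, add_mul]
  map_smul' c p := by
    rw [RingHom.id_apply, smul_eq_mul, ← integral_const_mul]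
    simp only [eval_smul, smul_eq_mul, mul_assoc]

variable (β) in
noncomputable def laguerreForm (hβ : -1 < β) : LinearMap.BilinForm ℝ ℝ[X] :=
  (LinearMap.mul ℝ ℝ[X]).compr₂ (laguerreFunctional β hβ)

variable (hβ : -1 < β)

theorem laguerreForm_apply (p q : ℝ[X]) :
    laguerreForm β hβ p q = ∫ x in Set.Ioi 0, p.eval x * q.eval x * x ^ β * exp (-x) := by
  simp [laguerreForm, laguerreFunctional]

theorem laguerreForm_isSymm : (laguerreForm β hβ).IsSymm :=
  ⟨fun p q => by simp [laguerreForm, mul_comm p q]⟩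

theorem laguerreForm_self_pos {p : ℝ[X]} (hp : p ≠ 0) : 0 < laguerreForm β hβ p p := by
  have hnonneg : 0 ≤ᵐ[volume.restrict (Set.Ioi 0)]
      fun x : ℝ => p.eval x * p.eval x * x ^ β * exp (-x) :=
    (ae_restrict_iff' measurableSet_Ioi).mpr (Eventually.of_forall fun x hx =>
      mul_nonneg (mul_nonneg (mul_self_nonneg _) (rpow_pos_of_pos hx β).le) (exp_pos _).le)
  rw [laguerreForm_apply, setIntegral_pos_iff_support_of_nonneg_ae hnonneg
    (by simpa only [eval_mul] using integrableOn_eval_mul_rpow_mul_exp hβ (p * p))]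
  have hroots : volume {x : ℝ | p.IsRoot x} = 0 := (finite_setOfPred_isRoot hp).measure_zero _
  have hsupport : Set.Ioi 0 \ {x | p.IsRoot x} ⊆
      Function.support (fun x : ℝ => p.eval x * p.eval x * x ^ β * exp (-x)) ∩ Set.Ioi 0 :=
    fun x ⟨hx, hpx⟩ => ⟨mul_ne_zero (mul_ne_zero (mul_self_ne_zero.mpr hpx)
      (rpow_pos_of_pos hx β).ne') (exp_pos _).ne', hx⟩
  calc (0 : ENNReal) < volume (Set.Ioi (0 : ℝ) \ {x | p.IsRoot x}) := by
        rw [measure_sdiff_null hroots, volume_Ioi]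
        exact ENNReal.zero_lt_top
    _ ≤ _ := measure_mono hsupport

end LaguerreWeight

theorem Polynomial.iterate_derivative_X_pow_mul_eval_zero {R : Type*} [CommSemiring R]
    (p : R[X]) {m i : ℕ} (hi : i < m) : (derivative^[i] (X ^ m * p)).eval 0 = 0 := by
  rw [← coeff_zero_eq_eval_zero, coeff_iterate_derivative, zero_add, coeff_X_pow_mul',
    if_neg (by omega), smul_zero]

theorem setIntegral_eval_X_pow_mul_mul_rpow (P q : ℝ[X]) (α : ℝ) (m : ℕ) :
    ∫ x in Set.Ioi 0, P.eval x * (X ^ m * q).eval x * x ^ α * exp (-x) =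
      ∫ x in Set.Ioi 0, P.eval x * q.eval x * x ^ (α + m) * exp (-x) :=
  setIntegral_congr_fun measurableSet_Ioi fun x hx => by
    simp only [eval_mul, eval_pow, eval_X, rpow_add hx, rpow_natCast]
    ring

theorem setIntegral_mul_rpow_eq_zero_of_sobolev_orthogonal {α : ℝ} (hα : -1 < α) {r : ℕ}
    {M : ℕ → ℝ} {P : ℝ[X]} {n : ℕ}
    (hP : ∀ q : ℝ[X], q.degree < n →
      1 / Gamma (α + 1) * ∫ x in Set.Ioi 0, (P.eval x * q.eval x * x ^ α * exp (-x)
        + ∑ i ∈ range (r + 1), M i * (derivative^[i] P).eval 0 * (derivative^[i] q).eval 0) = 0)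
    {p : ℝ[X]} (hp : p.degree < ↑(n - (r + 1))) :
    ∫ x in Set.Ioi 0, P.eval x * p.eval x * x ^ (α + r + 1) * exp (-x) = 0 := by
  rcases eq_or_ne p 0 with rfl | hp0
  · simp
  have hdeg : (X ^ (r + 1) * p).degree < (n : WithBot ℕ) := by
    have hpn := (natDegree_lt_iff_degree_lt hp0).mpr hp
    rw [← natDegree_lt_iff_degree_lt (mul_ne_zero (pow_ne_zero _ X_ne_zero) hp0),
      natDegree_X_pow_mul _ hp0]
    omega
  have hderiv : ∑ i ∈ range (r + 1),
      M i * (derivative^[i] P).eval 0 * (derivative^[i] (X ^ (r + 1) * p)).eval 0 = 0 :=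
    sum_eq_zero fun i hi => by
      rw [iterate_derivative_X_pow_mul_eval_zero p (mem_range.mp hi), mul_zero]
  have hΓ : 0 < Gamma (α + 1) := Gamma_pos_of_pos (by linarith)
  have h := hP _ hdeg
  simp only [hderiv, add_zero] at h
  rw [setIntegral_eval_X_pow_mul_mul_rpow, Nat.cast_succ, ← add_assoc] at h
  simpa [hΓ.ne'] using h

theorem laguerre_sobolev_connexion_formula_general
    (α : ℝ) (hα : -1 < α)
    (L : ℝ → ℕ → Polynomial ℝ)
    (hLmonic : ∀ β : ℝ, -1 < β → ∀ n : ℕ, (L β n).Monic ∧ (L β n).natDegree = n)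
    (hLorth : ∀ β : ℝ, -1 < β → ∀ n : ℕ, ∀ p : Polynomial ℝ, p.degree < (n : WithBot ℕ) →
      ∫ x in Set.Ioi (0:ℝ), (L β n).eval x * p.eval x * x ^ β * Real.exp (-x) = 0)
    (r : ℕ) (M : ℕ → ℝ)
    (Q : ℕ → Polynomial ℝ)
    (hQmonic : ∀ n : ℕ, (Q n).Monic ∧ (Q n).natDegree = n)
    (hQorth : ∀ n : ℕ, ∀ p : Polynomial ℝ, p.degree < (n : WithBot ℕ) →
      (1 / Real.Gamma (α + 1)) *
          ∫ x in Set.Ioi (0:ℝ), (Q n).eval x * p.eval x * x ^ α * Real.exp (-x)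
        + ∑ i ∈ Finset.range (r + 1),
            M i * (Polynomial.derivative^[i] (Q n)).eval 0 *
              (Polynomial.derivative^[i] p).eval 0 = 0) :
    ∀ n : ℕ, r + 1 ≤ n →
      ∃! a : Fin (r + 2) → ℝ, a 0 = 1 ∧
        Q n = ∑ j : Fin (r + 2), Polynomial.C (a j) * L (α + r + 1) (n - (j : ℕ)) := by
  intro n hn
  have hβ : -1 < α + r + 1 := by linarith [(r.cast_nonneg : (0 : ℝ) ≤ r)]
  let S : Sequence ℝ := ⟨L (α + r + 1), fun m => by
    rw [degree_eq_natDegree (hLmonic _ hβ m).1.ne_zero, (hLmonic _ hβ m).2]⟩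
  have hQβ (p : ℝ[X]) (hp : p.degree < ↑(n - (r + 1))) : laguerreForm _ hβ (Q n) p = 0 := by
    rw [laguerreForm_apply]
    exact setIntegral_mul_rpow_eq_zero_of_sobolev_orthogonal hα (hQorth n) hp
  exact S.existsUnique_sum_eq_of_quasiOrthogonal (laguerreForm_isSymm hβ)
    (fun m p hp => by rw [laguerreForm_apply]; exact hLorth _ hβ m p hp)
    (fun m => (laguerreForm_self_pos hβ (S.ne_zero m)).ne') (hQmonic n).1 (hQmonic n).2
    (hLmonic _ hβ n).1 hn hQβ

/-- Existence and uniqueness of the connexion coefficients expressing `Q_{n,r}` as a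
combination of monic Laguerre polynomials with parameter `α + r + 1`. -/
theorem laguerre_sobolev_connexion_formula
    (α : ℝ) (hα : -1 < α)
    (L : ℝ → ℕ → Polynomial ℝ)
    (hLmonic : ∀ β : ℝ, -1 < β → ∀ n : ℕ, (L β n).Monic ∧ (L β n).natDegree = n)
    (hLorth : ∀ β : ℝ, -1 < β → ∀ n : ℕ, ∀ p : Polynomial ℝ, p.degree < (n : WithBot ℕ) →
      ∫ x in Set.Ioi (0:ℝ), (L β n).eval x * p.eval x * x ^ β * Real.exp (-x) = 0)
    (r : ℕ) (M : ℕ → ℝ) (hM : ∀ i, i ≤ r → 0 < M i)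
    (Q : ℕ → Polynomial ℝ)
    (hQmonic : ∀ n : ℕ, (Q n).Monic ∧ (Q n).natDegree = n)
    (hQorth : ∀ n : ℕ, ∀ p : Polynomial ℝ, p.degree < (n : WithBot ℕ) →
      (1 / Real.Gamma (α + 1)) *
          ∫ x in Set.Ioi (0:ℝ), (Q n).eval x * p.eval x * x ^ α * Real.exp (-x)
        + ∑ i ∈ Finset.range (r + 1),
            M i * (Polynomial.derivative^[i] (Q n)).eval 0 *
              (Polynomial.derivative^[i] p).eval 0 = 0) :
    ∀ n : ℕ, r + 1 ≤ n →
      ∃! a : Fin (r + 2) → ℝ, a 0 = 1 ∧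
        Q n = ∑ j : Fin (r + 2), Polynomial.C (a j) * L (α + r + 1) (n - (j : ℕ)) :=
  laguerre_sobolev_connexion_formula_general α hα L hLmonic hLorth r M Q hQmonic hQorth
end

section
/- For every n ≥ 1 and every integer k with 0 ≤ k ≤ n-1, the differentiated Laguerre kernel satisfies K_{n-1}^{(k,0)}(0,0) = (-1)^k Γ(α+n+1) / ((n-(k+1))! Γ(α+k+2)). -/
open Polynomial Filter Finset MeasureTheory

/-!
Monic orthogonal polynomials for a positive definite functional are unique, so `L n` is the
explicit polynomial `∑ j, (-1)^(n-j) (n choose j) Γ(n+α+1)/Γ(j+α+1) X^j`. Its orthogonality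
reduces, through `∫ x^j x^α e^(-x) = Γ(j+α+1)`, to the vanishing of the `n`-th forward
difference of a polynomial of degree `< n`. Reading off coefficients at `0`, the `i`-th summand
of the kernel is `(-1)^k Γ(i+α+1) / ((i-k)! Γ(k+α+1))` for `i ≥ k` and `0` for `i < k`, and
these summands add up by the hockey-stick identity `∑_{m ≤ M} Γ(s+m)/m! = Γ(s+M+1)/(M! s)`.
-/

theorem Polynomial.sum_range_alternating_choose_mul_eval_eq_zero {R : Type*} [CommRing R]
    {P : R[X]} {n : ℕ} (hP : P.natDegree < n) :
    ∑ j ∈ range (n + 1), (-1 : R) ^ (n - j) * n.choose j * P.eval (j : R) = 0 := by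
  have h := congrFun (Polynomial.fwdDiff_iter_eq_zero_of_degree_lt hP) 0
  rw [fwdDiff_iter_eq_sum_shift] at h
  simpa [zsmul_eq_mul] using h

theorem Polynomial.IsMonicOfDegree.eq_of_orthogonal
    {R : Type*} [CommRing R] {P Q : R[X]} {n : ℕ} (hP : IsMonicOfDegree P n)
    (hQ : IsMonicOfDegree Q n) {Λ : R[X] →ₗ[R] R} (hΛ : ∀ p, Λ (p * p) = 0 → p = 0)
    (hPo : ∀ p : R[X], p.degree < n → Λ (P * p) = 0)
    (hQo : ∀ p : R[X], p.degree < n → Λ (Q * p) = 0) : P = Q := by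
  rcases eq_or_ne n 0 with rfl | hn
  · rw [isMonicOfDegree_zero_iff.mp hP, isMonicOfDegree_zero_iff.mp hQ]
  have hdeg : (P - Q).degree < n :=
    (degree_le_natDegree).trans_lt (WithBot.coe_lt_coe.mpr (hP.natDegree_sub_lt hn hQ))
  rw [← sub_eq_zero]
  exact hΛ _ (by rw [sub_mul, map_sub, hPo _ hdeg, hQo _ hdeg, sub_zero])

theorem LinearMap.map_mul_eq_zero_of_forall_degree_lt {R : Type*} [CommRing R]
    {Λ : R[X] →ₗ[R] R} {P : R[X]} {n : ℕ} (h : ∀ m < n, Λ (P * X ^ m) = 0)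
    {p : R[X]} (hp : p.degree < n) : Λ (P * p) = 0 := by
  rcases eq_or_ne p 0 with rfl | hp0
  · rw [mul_zero, map_zero]
  rw [p.as_sum_range_C_mul_X_pow' ((natDegree_lt_iff_degree_lt hp0).mpr hp), mul_sum, map_sum]
  refine sum_eq_zero fun m hm => ?_
  rw [mul_left_comm, ← smul_eq_C_mul, map_smul, h m (Finset.mem_range.mp hm), smul_zero]

theorem Real.Gamma_add_nat_eq_mul_ascPochhammer {s : ℝ} (hs : 0 < s) (m : ℕ) :
    Real.Gamma (s + m) = Real.Gamma s * (ascPochhammer ℝ m).eval s := by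
  induction m with
  | zero => simp
  | succ m ih =>
    rw [Nat.cast_succ, ← add_assoc, Real.Gamma_add_one (by positivity), ih,
      ascPochhammer_succ_eval]
    ring

theorem Real.sum_range_succ_Gamma_add_div_factorial {s : ℝ} (hs : 0 < s) (M : ℕ) :
    ∑ m ∈ range (M + 1), Real.Gamma (s + m) / m.factorial =
      Real.Gamma (s + M + 1) / (M.factorial * s) := by
  induction M with
  | zero => simp [Real.Gamma_add_one hs.ne', hs.ne']
  | succ M ih =>
    have hsM : 0 < s + M + 1 := by positivity
    rw [sum_range_succ, ih, Nat.factorial_succ]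
    push_cast
    rw [← add_assoc, Real.Gamma_add_one hsM.ne']
    field_simp
    ring

namespace Laguerre

variable {α : ℝ}

theorem natCast_add_add_one_pos (hα : -1 < α) (j : ℕ) : 0 < (j : ℝ) + α + 1 := by
  linarith [j.cast_nonneg (α := ℝ)]

theorem pow_mul_rpow_mul_exp_neg_eq {x : ℝ} (hx : 0 < x) (j : ℕ) :
    x ^ j * x ^ α * Real.exp (-x) = Real.exp (-x) * x ^ ((j + α + 1) - 1) := by
  rw [add_sub_cancel_right, Real.rpow_add hx, Real.rpow_natCast]
  ring

theorem integrableOn_pow_mul_rpow_mul_exp_neg (hα : -1 < α) (j : ℕ) :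
    IntegrableOn (fun x : ℝ => x ^ j * x ^ α * Real.exp (-x)) (Set.Ioi 0) :=
  (Real.GammaIntegral_convergent (natCast_add_add_one_pos hα j)).congr_fun
    (fun _ hx => (pow_mul_rpow_mul_exp_neg_eq hx j).symm) measurableSet_Ioi

theorem integral_pow_mul_rpow_mul_exp_neg (hα : -1 < α) (j : ℕ) :
    ∫ x in Set.Ioi 0, x ^ j * x ^ α * Real.exp (-x) = Real.Gamma (j + α + 1) := by
  rw [Real.Gamma_eq_integral (natCast_add_add_one_pos hα j)]
  exact setIntegral_congr_fun measurableSet_Ioi fun _ hx => pow_mul_rpow_mul_exp_neg_eq hx j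

theorem integrableOn_eval_mul_rpow_mul_exp_neg (hα : -1 < α) (p : ℝ[X]) :
    IntegrableOn (fun x : ℝ => p.eval x * x ^ α * Real.exp (-x)) (Set.Ioi 0) := by
  induction p using Polynomial.induction_on' with
  | add p q hp hq =>
    simp only [eval_add, add_mul]
    exact hp.add hq
  | monomial j a =>
    have h := (integrableOn_pow_mul_rpow_mul_exp_neg hα j).const_mul a
    simp only [eval_monomial, mul_assoc] at h ⊢
    exact h

noncomputable def laguerreIntegral (hα : -1 < α) : ℝ[X] →ₗ[ℝ] ℝ where
  toFun p := ∫ x in Set.Ioi 0, p.eval x * x ^ α * Real.exp (-x)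
  map_add' p q := by
    simp only [eval_add, add_mul]
    exact integral_add (integrableOn_eval_mul_rpow_mul_exp_neg hα p)
      (integrableOn_eval_mul_rpow_mul_exp_neg hα q)
  map_smul' a p := by
    simp only [eval_smul, smul_eq_mul, mul_assoc, RingHom.id_apply]
    exact integral_const_mul a _

theorem laguerreIntegral_apply (hα : -1 < α) (p : ℝ[X]) :
    laguerreIntegral hα p = ∫ x in Set.Ioi 0, p.eval x * x ^ α * Real.exp (-x) := rfl

theorem laguerreIntegral_X_pow (hα : -1 < α) (j : ℕ) :
    laguerreIntegral hα (X ^ j) = Real.Gamma (j + α + 1) := by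
  simpa only [laguerreIntegral_apply, eval_pow, eval_X] using
    integral_pow_mul_rpow_mul_exp_neg hα j

theorem laguerreIntegral_C_mul_X_pow (hα : -1 < α) (a : ℝ) (j : ℕ) :
    laguerreIntegral hα (C a * X ^ j) = a * Real.Gamma (j + α + 1) := by
  rw [← smul_eq_C_mul, map_smul, laguerreIntegral_X_pow, smul_eq_mul]

theorem laguerreIntegral_mul_self_pos (hα : -1 < α) {p : ℝ[X]} (hp : p ≠ 0) :
    0 < laguerreIntegral hα (p * p) := by
  have hpos : ∀ x ∈ Set.Ioi (0 : ℝ), 0 < x ^ α * Real.exp (-x) := fun x hx =>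
    mul_pos (Real.rpow_pos_of_pos hx α) (Real.exp_pos _)
  rw [laguerreIntegral_apply, setIntegral_pos_iff_support_of_nonneg_ae _
    (integrableOn_eval_mul_rpow_mul_exp_neg hα _)]
  · have hsub : Set.Ioi 0 \ {x | p.IsRoot x} ⊆
        Function.support (fun x => (p * p).eval x * x ^ α * Real.exp (-x)) ∩ Set.Ioi 0 :=
      fun x ⟨hx, hroot⟩ => ⟨by
        simpa only [Function.mem_support, eval_mul, mul_assoc] using
          mul_ne_zero (mul_ne_zero hroot hroot) (hpos x hx).ne', hx⟩
    refine lt_of_lt_of_le ?_ (measure_mono hsub)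
    rw [measure_sdiff_null ((p.finite_setOfPred_isRoot hp).measure_zero _), Real.volume_Ioi]
    exact ENNReal.zero_lt_top
  · filter_upwards [ae_restrict_mem measurableSet_Ioi] with x hx
    simpa only [Pi.zero_apply, eval_mul, mul_assoc] using
      mul_nonneg (mul_self_nonneg _) (hpos x hx).le

noncomputable def monicLaguerreCoeff (α : ℝ) (n j : ℕ) : ℝ :=
  (-1) ^ (n - j) * n.choose j * Real.Gamma (n + α + 1) / Real.Gamma (j + α + 1)

noncomputable def monicLaguerre (α : ℝ) (n : ℕ) : ℝ[X] :=
  ∑ j ∈ range (n + 1), C (monicLaguerreCoeff α n j) * X ^ j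

theorem monicLaguerreCoeff_of_lt {n j : ℕ} (h : n < j) : monicLaguerreCoeff α n j = 0 := by
  simp [monicLaguerreCoeff, Nat.choose_eq_zero_of_lt h]

theorem monicLaguerreCoeff_self (hα : -1 < α) (n : ℕ) : monicLaguerreCoeff α n n = 1 := by
  have := (Real.Gamma_pos_of_pos (natCast_add_add_one_pos hα n)).ne'
  simp [monicLaguerreCoeff, this]

theorem coeff_monicLaguerre (n j : ℕ) :
    (monicLaguerre α n).coeff j = monicLaguerreCoeff α n j := by
  simp only [monicLaguerre, finsetSum_coeff, coeff_C_mul_X_pow, sum_ite_eq, mem_range]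
  split_ifs with h
  · rfl
  · exact (monicLaguerreCoeff_of_lt (by omega)).symm

theorem isMonicOfDegree_monicLaguerre (hα : -1 < α) (n : ℕ) :
    IsMonicOfDegree (monicLaguerre α n) n := by
  refine (isMonicOfDegree_iff _ _).mpr ⟨natDegree_le_iff_coeff_eq_zero.mpr fun j hj => ?_, ?_⟩
  · rw [coeff_monicLaguerre, monicLaguerreCoeff_of_lt (by exact_mod_cast hj)]
  · rw [coeff_monicLaguerre, monicLaguerreCoeff_self hα]

theorem laguerreIntegral_monicLaguerre_mul_X_pow (hα : -1 < α) {n m : ℕ} (hm : m < n) :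
    laguerreIntegral hα (monicLaguerre α n * X ^ m) = 0 := by
  set Q : ℝ[X] := (ascPochhammer ℝ m).comp (X + C (α + 1))
  have hQ : Q.natDegree < n := by
    rwa [natDegree_comp, ascPochhammer_natDegree, natDegree_X_add_C, mul_one]
  have hterm : ∀ j : ℕ, monicLaguerreCoeff α n j * Real.Gamma ((j + m : ℕ) + α + 1) =
      Real.Gamma (n + α + 1) * ((-1) ^ (n - j) * n.choose j * Q.eval (j : ℝ)) := by
    intro j
    have hj := natCast_add_add_one_pos hα j
    have hΓ : ((j + m : ℕ) : ℝ) + α + 1 = (j + α + 1) + m := by push_cast; ring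
    rw [hΓ, Real.Gamma_add_nat_eq_mul_ascPochhammer hj, monicLaguerreCoeff]
    simp only [Q, eval_comp, eval_add, eval_X, eval_C, ← add_assoc]
    field_simp [(Real.Gamma_pos_of_pos hj).ne']
  simp_rw [monicLaguerre, sum_mul, mul_assoc (C _), ← pow_add, map_sum,
    laguerreIntegral_C_mul_X_pow, hterm]
  rw [← mul_sum, sum_range_alternating_choose_mul_eval_eq_zero hQ, mul_zero]

theorem eq_monicLaguerre (hα : -1 < α) {L : ℝ[X]} {n : ℕ} (hL : IsMonicOfDegree L n)
    (hLo : ∀ p : ℝ[X], p.degree < n →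
      ∫ x in Set.Ioi (0 : ℝ), L.eval x * p.eval x * x ^ α * Real.exp (-x) = 0) :
    L = monicLaguerre α n :=
  hL.eq_of_orthogonal (isMonicOfDegree_monicLaguerre hα n)
    (fun _ h => by_contra fun hp => (laguerreIntegral_mul_self_pos hα hp).ne' h)
    (fun p hp => by simpa only [laguerreIntegral_apply, eval_mul] using hLo p hp)
    (fun _ => (laguerreIntegral hα).map_mul_eq_zero_of_forall_degree_lt
      fun _ hm => laguerreIntegral_monicLaguerre_mul_X_pow hα hm)

theorem monicLaguerre_eval_zero (n : ℕ) :
    (monicLaguerre α n).eval 0 = monicLaguerreCoeff α n 0 := by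
  rw [← coeff_zero_eq_eval_zero, coeff_monicLaguerre]

theorem iterate_derivative_monicLaguerre_eval_zero (n k : ℕ) :
    (derivative^[k] (monicLaguerre α n)).eval 0 = k.factorial * monicLaguerreCoeff α n k := by
  rw [← coeff_zero_eq_eval_zero, coeff_iterate_derivative, zero_add, coeff_monicLaguerre,
    Nat.descFactorial_self, nsmul_eq_mul]

theorem monicLaguerre_kernel_summand (hα : -1 < α) (k m : ℕ) :
    (derivative^[k] (monicLaguerre α (k + m))).eval 0 * (monicLaguerre α (k + m)).eval 0 /
        (((k + m).factorial : ℝ) * Real.Gamma ((k + m : ℕ) + α + 1) / Real.Gamma (α + 1)) =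
      (-1) ^ k / Real.Gamma (k + α + 1) * (Real.Gamma (k + α + 1 + m) / m.factorial) := by
  have hfact : ((k + m).choose k * m.factorial * k.factorial : ℝ) = (k + m).factorial := by
    exact_mod_cast add_comm m k ▸ Nat.add_choose_mul_factorial_mul_factorial m k
  have hsign : (-1 : ℝ) ^ m * (-1) ^ (k + m) = (-1) ^ k := by
    rw [← pow_add, show m + (k + m) = k + 2 * m by ring, pow_add, pow_mul, neg_one_sq, one_pow,
      mul_one]
  have hΓ : ((k + m : ℕ) : ℝ) + α + 1 = k + α + 1 + m := by push_cast; ring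
  rw [iterate_derivative_monicLaguerre_eval_zero, monicLaguerre_eval_zero, monicLaguerreCoeff,
    monicLaguerreCoeff, Nat.add_sub_cancel_left, Nat.sub_zero, Nat.choose_zero_right,
    Nat.cast_one, Nat.cast_zero, zero_add, hΓ, ← hfact, ← hsign]
  have := (Real.Gamma_pos_of_pos (natCast_add_add_one_pos hα k)).ne'
  have := (Real.Gamma_pos_of_pos (by linarith : 0 < α + 1)).ne'
  have := (Real.Gamma_pos_of_pos (hΓ ▸ natCast_add_add_one_pos hα (k + m))).ne'
  have : ((k + m).choose k : ℝ) ≠ 0 := by exact_mod_cast (Nat.choose_pos (by omega)).ne'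
  field_simp

end Laguerre

/-- Explicit value of the differentiated Laguerre kernel `K_{n-1}^{(k,0)}(0,0)`. -/
theorem laguerre_kernel_derivative_at_zero
    (α : ℝ) (hα : -1 < α)
    (L : ℕ → Polynomial ℝ)
    (hLmonic : ∀ n : ℕ, (L n).Monic ∧ (L n).natDegree = n)
    (hLorth : ∀ n : ℕ, ∀ p : Polynomial ℝ, p.degree < (n : WithBot ℕ) →
      ∫ x in Set.Ioi (0:ℝ), (L n).eval x * p.eval x * x ^ α * Real.exp (-x) = 0) :
    ∀ n : ℕ, 1 ≤ n → ∀ k : ℕ, k ≤ n - 1 →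
      ∑ i ∈ Finset.range n,
          (Polynomial.derivative^[k] (L i)).eval 0 * (L i).eval 0 /
            ((i.factorial : ℝ) * Real.Gamma (i + α + 1) / Real.Gamma (α + 1)) =
        (-1) ^ k * Real.Gamma (α + n + 1) /
          (((n - (k + 1)).factorial : ℝ) * Real.Gamma (α + k + 2)) := by
  intro n hn k hk
  obtain ⟨M, rfl⟩ : ∃ M, n = k + (M + 1) := ⟨n - (k + 1), by omega⟩
  have hL : ∀ i, L i = Laguerre.monicLaguerre α i := fun i =>
    Laguerre.eq_monicLaguerre hα ⟨(hLmonic i).2, (hLmonic i).1⟩ (hLorth i)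
  have hlow : ∀ i ∈ range k, (derivative^[k] (L i)).eval 0 = 0 := fun i hi => by
    rw [iterate_derivative_eq_zero ((hLmonic i).2.trans_lt (mem_range.mp hi)), eval_zero]
  rw [sum_range_add, sum_eq_zero fun i hi => by rw [hlow i hi, zero_mul, zero_div], zero_add]
  simp only [hL, Laguerre.monicLaguerre_kernel_summand hα]
  have hs := Laguerre.natCast_add_add_one_pos hα k
  rw [← mul_sum, Real.sum_range_succ_Gamma_add_div_factorial hs,
    show α + k + 2 = (k + α + 1) + 1 by ring, Real.Gamma_add_one hs.ne',
    show k + (M + 1) - (k + 1) = M by omega]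
  push_cast
  field_simp
  ring
end
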